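/- arXiv:1906.08723 — 3 statements merged into one kernel-verified Lean document; each statement's English description precedes it below -/
import Mathlib

section
/- Let A be a 2×2 complex matrix with determinant 1 and let n ≥ 1 be a natural number. If the trace of Aⁿ is an algebraic integer (i.e., integral over ℤ), then the trace of A is an algebraic integer. -/
/-!
For `A ∈ SL(2, ℂ)` with `t = tr A`, Cayley–Hamilton gives
`tr (A ^ (n + 2)) = t · tr (A ^ (n + 1)) - tr (A ^ n)`, the recursion of the Dickson polynomials
`Dₙ(X, 1)`; hence `tr (A ^ n) = Dₙ(t, 1)`. For `n ≥ 1` this is a monic integer polynomial of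
degree `n`, so `t` is a root of a monic polynomial whose coefficients are algebraic integers.
-/

namespace Polynomial

variable {R : Type*} [CommRing R] (k : ℕ) (a : R)

theorem natDegree_dickson [Nontrivial R] : ∀ n : ℕ, (dickson k a n).natDegree = n
  | 0 => by
    rw [dickson_zero, ← natDegree_C (3 - k : R), map_sub, map_natCast, map_ofNat]
  | 1 => by rw [dickson_one, natDegree_X]
  | n + 2 => by
    have hne : dickson k a (n + 1) ≠ 0 :=
      ne_zero_of_natDegree_gt (n := 0) (by rw [natDegree_dickson (n + 1)]; omega)
    have hlt : (C a * dickson k a n).natDegree < (X * dickson k a (n + 1)).natDegree := by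
      rw [natDegree_X_mul hne, natDegree_dickson (n + 1)]
      exact (natDegree_C_mul_le _ _).trans_lt (by rw [natDegree_dickson n]; omega)
    rw [dickson_add_two, natDegree_sub_eq_left_of_natDegree_lt hlt, natDegree_X_mul hne,
      natDegree_dickson (n + 1)]

theorem dickson_monic (n : ℕ) : (dickson k a (n + 1)).Monic := by
  nontriviality R
  induction n with
  | zero => exact dickson_one k a ▸ monic_X
  | succ n ih =>
    rw [dickson_add_two]
    refine (monic_X.mul ih).sub_of_left (degree_lt_degree ?_)
    rw [natDegree_X_mul ih.ne_zero, natDegree_dickson]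
    exact (natDegree_C_mul_le _ _).trans_lt (by rw [natDegree_dickson]; omega)

end Polynomial

namespace Matrix

open Polynomial

variable {R : Type*} [CommRing R] (A : Matrix (Fin 2) (Fin 2) R)

theorem sq_fin_two_eq_trace_smul_sub_det_smul : A ^ 2 = A.trace • A - A.det • 1 := by
  ext i j
  fin_cases i <;> fin_cases j <;> simp [sq, mul_apply, trace_fin_two, det_fin_two] <;> ring

theorem trace_pow_add_two (n : ℕ) :
    (A ^ (n + 2)).trace = A.trace * (A ^ (n + 1)).trace - A.det * (A ^ n).trace := by
  rw [pow_add, sq_fin_two_eq_trace_smul_sub_det_smul, mul_sub, Matrix.mul_smul, Matrix.mul_smul,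
    mul_one, ← pow_succ, trace_sub, trace_smul, trace_smul, smul_eq_mul, smul_eq_mul]

theorem trace_pow_eq_eval_dickson : ∀ n : ℕ, (A ^ n).trace = (dickson 1 A.det n).eval A.trace
  | 0 => by
    simp only [pow_zero, trace_one, Fintype.card_fin, dickson_zero, eval_sub, eval_ofNat,
      eval_natCast]
    norm_num
  | 1 => by rw [pow_one, dickson_one, eval_X]
  | n + 2 => by
    rw [trace_pow_add_two, trace_pow_eq_eval_dickson n, trace_pow_eq_eval_dickson (n + 1),
      dickson_add_two, eval_sub, eval_mul, eval_mul, eval_X, eval_C]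

theorem trace_pow_eq_aeval_dickson_of_det_eq_one {S : Type*} [CommRing S] [Algebra S R]
    (hA : A.det = 1) (n : ℕ) : (A ^ n).trace = aeval A.trace (dickson 1 (1 : S) n) := by
  rw [trace_pow_eq_eval_dickson, hA, aeval_def, eval₂_eq_eval_map, map_dickson, map_one]

end Matrix

/-- If `A` is a `2 × 2` complex matrix with determinant `1`, `n ≥ 1`, and the
trace of `A ^ n` is an algebraic integer, then the trace of `A` is an algebraic
integer. -/
theorem stmt_3 (A : Matrix (Fin 2) (Fin 2) ℂ) (hA : A.det = 1) (n : ℕ)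
    (hn : 1 ≤ n) (h : IsIntegral ℤ (A ^ n).trace) :
    IsIntegral ℤ A.trace := by
  obtain ⟨m, rfl⟩ := Nat.exists_eq_add_of_le' hn
  rw [A.trace_pow_eq_aeval_dickson_of_det_eq_one (S := ℤ) hA] at h
  exact .of_aeval_monic (Polynomial.dickson_monic 1 1 m)
    (by rw [Polynomial.natDegree_dickson]; omega) h
end

section
/- Equip ℝ⁴ with the Lorentzian bilinear form ⟨x, y⟩ = -x₀y₀ + x₁y₁ + x₂y₂ + x₃y₃ (timelike coordinate first). Let v₁ = (0, 0, 0, 1), v₂ = (0, 0, -1, 0), v₃ = (0, -(1/4)√(10 - 2√5), (1 + √5)/4, 0), v₄ = (-(1/2)√(6√5 + 11), (1/4)√(50 + 22√5), (1 + √5)/4, -1/2), v₅ = (-(1/10)√(55 + 30√5), (1/10)√(50 + 10√5), 0, -1 - √5/10). Then the 5×5 matrix with entries G_{i,j} = 2⟨v_i, v_j⟩ equals the matrix with rows (2, 0, 0, -1, β), (0, 2, -φ, -φ, 0), (0, -φ, 2, -φ, -1), (-1, -φ, -φ, 2, 0), (β, 0, -1, 0, 2), where φ = (1 + √5)/2 and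 β = -2 - √5/5. -/
set_option maxHeartbeats 2000000


/-- The Gram matrix (with convention `G i j = 2⟨vᵢ, vⱼ⟩` for the Lorentzian
form `⟨x, y⟩ = -x₀y₀ + x₁y₁ + x₂y₂ + x₃y₃`) of the five outward unit normal
vectors of the prism AA5m equals the stated matrix. -/
theorem stmt_7 :
    let B : (Fin 4 → ℝ) → (Fin 4 → ℝ) → ℝ := fun x y =>
      -(x 0 * y 0) + x 1 * y 1 + x 2 * y 2 + x 3 * y 3
    let v : Fin 5 → Fin 4 → ℝ :=
      ![![0, 0, 0, 1],
        ![0, 0, -1, 0],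
        ![0, -(1/4) * Real.sqrt (10 - 2 * Real.sqrt 5), (1 + Real.sqrt 5) / 4, 0],
        ![-(1/2) * Real.sqrt (6 * Real.sqrt 5 + 11),
          (1/4) * Real.sqrt (50 + 22 * Real.sqrt 5), (1 + Real.sqrt 5) / 4, -(1/2)],
        ![-(1/10) * Real.sqrt (55 + 30 * Real.sqrt 5),
          (1/10) * Real.sqrt (50 + 10 * Real.sqrt 5), 0, -1 - Real.sqrt 5 / 10]]
    let φ : ℝ := (1 + Real.sqrt 5) / 2
    let β : ℝ := -2 - Real.sqrt 5 / 5
    (Matrix.of fun i j : Fin 5 => 2 * B (v i) (v j)) =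
      !![2,  0,  0,  -1, β;
         0,  2,  -φ, -φ, 0;
         0,  -φ, 2,  -φ, -1;
         -1, -φ, -φ, 2,  0;
         β,  0,  -1, 0,  2] := by
  intro B v φ β
  have hs : Real.sqrt 5 ^ 2 = 5 := Real.sq_sqrt (by norm_num)
  have hsn : (0:ℝ) ≤ Real.sqrt 5 := Real.sqrt_nonneg 5
  have hs3 : Real.sqrt 5 ≤ 3 := by
    nlinarith [hs, hsn]
  have n1 : (0:ℝ) ≤ 10 - 2 * Real.sqrt 5 := by linarith
  have n2 : (0:ℝ) ≤ 6 * Real.sqrt 5 + 11 := by linarith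
  have n3 : (0:ℝ) ≤ 50 + 22 * Real.sqrt 5 := by linarith
  have n4 : (0:ℝ) ≤ 55 + 30 * Real.sqrt 5 := by linarith
  have n5 : (0:ℝ) ≤ 50 + 10 * Real.sqrt 5 := by linarith
  have q1 : Real.sqrt (10 - 2 * Real.sqrt 5) ^ 2 = 10 - 2 * Real.sqrt 5 := Real.sq_sqrt n1
  have q2 : Real.sqrt (6 * Real.sqrt 5 + 11) ^ 2 = 6 * Real.sqrt 5 + 11 := Real.sq_sqrt n2
  have q3 : Real.sqrt (50 + 22 * Real.sqrt 5) ^ 2 = 50 + 22 * Real.sqrt 5 := Real.sq_sqrt n3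
  have q4 : Real.sqrt (55 + 30 * Real.sqrt 5) ^ 2 = 55 + 30 * Real.sqrt 5 := Real.sq_sqrt n4
  have q5 : Real.sqrt (50 + 10 * Real.sqrt 5) ^ 2 = 50 + 10 * Real.sqrt 5 := Real.sq_sqrt n5
  have h1 : Real.sqrt (10 - 2 * Real.sqrt 5) * Real.sqrt (50 + 22 * Real.sqrt 5)
      = 10 + 6 * Real.sqrt 5 := by
    rw [← Real.sqrt_mul n1, show (10 - 2 * Real.sqrt 5) * (50 + 22 * Real.sqrt 5)
      = (10 + 6 * Real.sqrt 5) ^ 2 by nlinarith [hs]]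
    exact Real.sqrt_sq (by linarith)
  have h2 : Real.sqrt (10 - 2 * Real.sqrt 5) * Real.sqrt (50 + 10 * Real.sqrt 5)
      = 20 := by
    rw [← Real.sqrt_mul n1, show (10 - 2 * Real.sqrt 5) * (50 + 10 * Real.sqrt 5)
      = (20:ℝ) ^ 2 by nlinarith [hs]]
    exact Real.sqrt_sq (by norm_num)
  have h3 : Real.sqrt (6 * Real.sqrt 5 + 11) * Real.sqrt (55 + 30 * Real.sqrt 5)
      = 30 + 11 * Real.sqrt 5 := by
    rw [← Real.sqrt_mul n2, show (6 * Real.sqrt 5 + 11) * (55 + 30 * Real.sqrt 5)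
      = (30 + 11 * Real.sqrt 5) ^ 2 by nlinarith [hs]]
    exact Real.sqrt_sq (by linarith)
  have h4 : Real.sqrt (50 + 22 * Real.sqrt 5) * Real.sqrt (50 + 10 * Real.sqrt 5)
      = 40 + 20 * Real.sqrt 5 := by
    rw [← Real.sqrt_mul n3, show (50 + 22 * Real.sqrt 5) * (50 + 10 * Real.sqrt 5)
      = (40 + 20 * Real.sqrt 5) ^ 2 by nlinarith [hs]]
    exact Real.sqrt_sq (by linarith)
  ext i j
  fin_cases i <;> fin_cases j <;>
    simp only [B, v, φ, β, Matrix.of_apply] <;>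
    simp <;>
    nlinarith [hs, q1, q2, q3, q4, q5, h1, h2, h3, h4]
end

section
/- Let z be the complex number z = 1/2 - (i/2)·√(8√5 - 5), where √(8√5 - 5) denotes the positive real square root. Then z⁴ - 2z³ - z² + 2z - 19 = 0, and the polynomial x⁴ - 2x³ - x² + 2x - 19 is irreducible over ℚ. -/
/-!
With `t = x² - x` the quartic is `(t - 1)² - 20`, and `z² - z = -(1 + (8√5 - 5))/4 = 1 - 2√5`,
so `z` is a root. Irreducibility is checked modulo `3`: there the monic quartic has no root and
no factorization into two monic quadratics, and Gauss's lemma lifts this to `ℚ`.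
-/

open Polynomial

namespace Polynomial

theorem Monic.eq_X_sq_add_C_mul_X_add_C {R : Type*} [Semiring R] {p : R[X]} (hp : p.Monic)
    (h : p.natDegree = 2) : p = X ^ 2 + C (p.coeff 1) * X + C (p.coeff 0) := by
  conv_lhs => rw [hp.as_sum, h]
  simp only [Finset.sum_range_succ, Finset.sum_range_zero, pow_zero, pow_one, mul_one, zero_add]
  abel

/-- `hquad` rules out a factorization `(X² + pX + q)(X² + rX + s)`, compared coefficientwise. -/
theorem irreducible_X_pow_four_add {R : Type*} [CommRing R] [IsDomain R] {a b c d : R}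
    (hroot : ∀ x : R, x ^ 4 + a * x ^ 3 + b * x ^ 2 + c * x + d ≠ 0)
    (hquad : ∀ p q r s : R, ¬(p + r = a ∧ q + s + p * r = b ∧ p * s + q * r = c ∧ q * s = d)) :
    Irreducible (X ^ 4 + C a * X ^ 3 + C b * X ^ 2 + C c * X + C d) := by
  set f : R[X] := X ^ 4 + C a * X ^ 3 + C b * X ^ 2 + C c * X + C d with hf_def
  have hmonic : f.Monic := by rw [hf_def]; monicity!
  have hdeg : f.natDegree = 4 := by rw [hf_def]; compute_degree!
  refine hmonic.irreducible_iff_natDegree'.mpr ⟨fun h1 => by simp [h1] at hdeg, ?_⟩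
  intro g h hg hh hgh hdeg_h
  rw [hdeg, Finset.mem_Ioc] at hdeg_h
  have hsum : g.natDegree + h.natDegree = 4 := by rw [← hg.natDegree_mul hh, hgh, hdeg]
  obtain hh1 | hh2 : h.natDegree = 1 ∨ h.natDegree = 2 := by omega
  · apply hroot (-h.coeff 0)
    have := congrArg (eval (-h.coeff 0)) hgh
    rw [hh.eq_X_add_C hh1] at this
    simpa [hf_def] using this.symm
  · obtain ⟨p, q, hg⟩ : ∃ p q, g = X ^ 2 + C p * X + C q :=
      ⟨_, _, hg.eq_X_sq_add_C_mul_X_add_C (by omega)⟩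
    obtain ⟨r, s, hh⟩ : ∃ r s, h = X ^ 2 + C r * X + C s :=
      ⟨_, _, hh.eq_X_sq_add_C_mul_X_add_C hh2⟩
    have hprod : g * h = X ^ 4 + C (p + r) * X ^ 3 + C (q + s + p * r) * X ^ 2
        + C (p * s + q * r) * X + C (q * s) := by
      rw [hg, hh]; simp only [map_add, map_mul]; ring
    rw [hprod, hf_def] at hgh
    have hcoeff (n : ℕ) := congrArg (coeff · n) hgh
    refine hquad p q r s ⟨?_, ?_, ?_, ?_⟩
    · simpa [coeff_X, coeff_C, -map_add, -map_mul] using hcoeff 3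
    · simpa [coeff_X, coeff_C, -map_add, -map_mul] using hcoeff 2
    · simpa [coeff_X, coeff_C, -map_add, -map_mul] using hcoeff 1
    · simpa [coeff_X, coeff_C, -map_add, -map_mul] using hcoeff 0

end Polynomial

theorem irreducible_map_zmod_three :
    Irreducible ((X ^ 4 - 2 * X ^ 3 - X ^ 2 + 2 * X - 19 : ℤ[X]).map (Int.castRingHom (ZMod 3))) := by
  have hmap : (X ^ 4 - 2 * X ^ 3 - X ^ 2 + 2 * X - 19 : ℤ[X]).map (Int.castRingHom (ZMod 3))
      = X ^ 4 + C (-2) * X ^ 3 + C (-1) * X ^ 2 + C 2 * X + C (-19) := by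
    simp only [Polynomial.map_sub, Polynomial.map_add, Polynomial.map_mul, Polynomial.map_pow,
      map_X, Polynomial.map_ofNat, map_neg, map_ofNat, map_one]
    ring
  rw [hmap]
  exact irreducible_X_pow_four_add (by decide) (by decide)

theorem irreducible_quartic_rat :
    Irreducible (X ^ 4 - 2 * X ^ 3 - X ^ 2 + 2 * X - 19 : ℚ[X]) := by
  have hmonic : (X ^ 4 - 2 * X ^ 3 - X ^ 2 + 2 * X - 19 : ℤ[X]).Monic := by monicity!
  have hint := hmonic.irreducible_of_irreducible_map _ _ irreducible_map_zmod_three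
  have hmap : (X ^ 4 - 2 * X ^ 3 - X ^ 2 + 2 * X - 19 : ℤ[X]).map (Int.castRingHom ℚ)
      = X ^ 4 - 2 * X ^ 3 - X ^ 2 + 2 * X - 19 := by
    simp only [Polynomial.map_sub, Polynomial.map_add, Polynomial.map_mul, Polynomial.map_pow,
      map_X, Polynomial.map_ofNat]
  exact hmap ▸ (IsPrimitive.Int.irreducible_iff_irreducible_map_cast hmonic.isPrimitive).mp hint

theorem sq_sub_self_eq_one_sub_two_sqrt_five :
    let z : ℂ := 1/2 - (Complex.I / 2) * (Real.sqrt (8 * Real.sqrt 5 - 5) : ℝ)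
    z ^ 2 - z = 1 - 2 * (Real.sqrt 5 : ℂ) := by
  intro z
  have hw : Real.sqrt (8 * Real.sqrt 5 - 5) ^ 2 = 8 * Real.sqrt 5 - 5 :=
    Real.sq_sqrt (by nlinarith [Real.sqrt_nonneg 5, Real.sq_sqrt (show (0:ℝ) ≤ 5 by norm_num)])
  have hwC : (Real.sqrt (8 * Real.sqrt 5 - 5) : ℂ) ^ 2 = 8 * (Real.sqrt 5 : ℂ) - 5 := by
    exact_mod_cast hw
  linear_combination (-1/4 : ℂ) * hwC
    + (1/4 : ℂ) * (Real.sqrt (8 * Real.sqrt 5 - 5) : ℂ) ^ 2 * Complex.I_sq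

/-- The complex number `z = 1/2 - (i/2)√(8√5 - 5)` is a root of
`x⁴ - 2x³ - x² + 2x - 19`, and this polynomial is irreducible over `ℚ`. -/
theorem stmt_9 :
    let z : ℂ := 1/2 - (Complex.I / 2) * (Real.sqrt (8 * Real.sqrt 5 - 5) : ℝ)
    z ^ 4 - 2 * z ^ 3 - z ^ 2 + 2 * z - 19 = 0 ∧
      Irreducible (X ^ 4 - 2 * X ^ 3 - X ^ 2 + 2 * X - 19 : ℚ[X]) := by
  intro z
  refine ⟨?_, irreducible_quartic_rat⟩
  have ht : z ^ 2 - z = 1 - 2 * (Real.sqrt 5 : ℂ) := sq_sub_self_eq_one_sub_two_sqrt_five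
  have h5 : (Real.sqrt 5 : ℂ) ^ 2 = 5 := by exact_mod_cast Real.sq_sqrt (by norm_num : (0:ℝ) ≤ 5)
  linear_combination (z ^ 2 - z - 1 - 2 * (Real.sqrt 5 : ℂ)) * ht + 4 * h5
end
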